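/- arXiv:2301.09819 — 2 statements merged into one kernel-verified Lean document; each statement's English description precedes it below -/
import Mathlib

section
/- Under the reweighted distribution P_w with weight w := P(y, z_c)·P(z_s) / P(y, z_c, z_s), the second moment matrix of z = [z_c; z_s] is block diagonal when z_c and z_s are centered under P_w: Σ^w = diag(Σ_c, Σ_s), where Σ_c = E[z_c z_c^⊤] under P(z_c) and Σ_s = E[z_s z_s^⊤] under P(z_s). -/
open MeasureTheory

section aux

variable {α β γ : Type*} [MeasureSpace α] [MeasureSpace β] [MeasureSpace γ]
  [SigmaFinite (volume : Measure α)] [SigmaFinite (volume : Measure β)]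
  [SigmaFinite (volume : Measure γ)]

lemma factor_integral (Φ : α × β → ℝ) (Ψ : γ → ℝ) :
    ∫ v : α × β × γ, Φ (v.1, v.2.1) * Ψ v.2.2 = (∫ w, Φ w) * ∫ z, Ψ z := by
  have h := (MeasureTheory.volume_preserving_prodAssoc (α₁ := α) (β₁ := β) (γ₁ := γ)).integral_comp
      MeasurableEquiv.prodAssoc.measurableEmbedding
      (fun v : α × β × γ => Φ (v.1, v.2.1) * Ψ v.2.2)
  rw [← h]
  rw [show (fun w : (α × β) × γ => Φ ((MeasurableEquiv.prodAssoc w).1,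
      (MeasurableEquiv.prodAssoc w).2.1) * Ψ (MeasurableEquiv.prodAssoc w).2.2)
      = fun w : (α × β) × γ => Φ w.1 * Ψ w.2 from funext fun w => rfl]
  rw [Measure.volume_eq_prod]
  exact integral_prod_mul _ _

lemma integrable_assoc {F : α × β × γ → ℝ} (hF : Integrable F) :
    Integrable (fun w : (α × β) × γ => F (w.1.1, w.1.2, w.2)) := by
  have := (MeasureTheory.volume_preserving_prodAssoc (α₁ := α) (β₁ := β) (γ₁ := γ)).integrable_comp_emb
      MeasurableEquiv.prodAssoc.measurableEmbedding (g := F)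
  exact this.mpr hF

lemma split_last (F : α × β × γ → ℝ) (hF : Integrable F) :
    ∫ v : α × β × γ, F v = ∫ w : α × β, ∫ z : γ, F (w.1, w.2, z) := by
  rw [← (MeasureTheory.volume_preserving_prodAssoc (α₁ := α) (β₁ := β) (γ₁ := γ)).integral_comp
      MeasurableEquiv.prodAssoc.measurableEmbedding F]
  have hF' : Integrable (fun w : (α × β) × γ => F (w.1.1, w.1.2, w.2)) := integrable_assoc hF
  rw [Measure.volume_eq_prod, integral_prod _ (by exact hF')]
  rfl

lemma split_first (F : α × β × γ → ℝ) (hF : Integrable F) :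
    ∫ v : α × β × γ, F v = ∫ z : γ, ∫ w : α × β, F (w.1, w.2, z) := by
  rw [split_last F hF]
  exact integral_integral_swap (f := fun (w : α × β) (z : γ) => F (w.1, w.2, z))
    (by rw [← Measure.volume_eq_prod]; exact integrable_assoc hF)

end aux

/-- The reweighted density `P_w = w · P` with
`w(y,z_c,z_s) = P(y,z_c)·P(z_s)/P(y,z_c,z_s)`. -/
noncomputable def reweightedDensity (dc ds : ℕ)
    (p : ℝ × (Fin dc → ℝ) × (Fin ds → ℝ) → ℝ)
    (pYC : ℝ × (Fin dc → ℝ) → ℝ) (pS : (Fin ds → ℝ) → ℝ) :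
    ℝ × (Fin dc → ℝ) × (Fin ds → ℝ) → ℝ :=
  fun v => (pYC (v.1, v.2.1) * pS v.2.2 / p v) * p v

/-- The concatenated feature vector `z = [z_c; z_s]`, indexed by `Fin dc ⊕ Fin ds`. -/
def concatFeat (dc ds : ℕ) (v : ℝ × (Fin dc → ℝ) × (Fin ds → ℝ)) :
    Fin dc ⊕ Fin ds → ℝ :=
  Sum.elim v.2.1 v.2.2

/-- under `P_w`, when `z_c` and `z_s` are centered under `P_w`, the
second moment matrix `Σ^w = E[w·z z^⊤]` of `z = [z_c; z_s]` is block diagonal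
`diag(Σ_c, Σ_s)`, where `Σ_c = E[z_c z_c^⊤]` and `Σ_s = E[z_s z_s^⊤]` under the
original marginals. -/
theorem reweighted_second_moment_block_diagonal (dc ds : ℕ)
    (p : ℝ × (Fin dc → ℝ) × (Fin ds → ℝ) → ℝ)
    (pYC : ℝ × (Fin dc → ℝ) → ℝ) (pS : (Fin ds → ℝ) → ℝ)
    (hpos : ∀ v, 0 < p v)
    (hint : Integrable p)
    (hnorm : ∫ v, p v = 1)
    (hYC : ∀ y zc, pYC (y, zc) = ∫ zs, p (y, zc, zs))
    (hS : ∀ zs, pS zs = ∫ y : ℝ, ∫ zc : Fin dc → ℝ, p (y, zc, zs))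
    (hint2 : ∀ i j, Integrable (fun v : ℝ × (Fin dc → ℝ) × (Fin ds → ℝ) =>
      reweightedDensity dc ds p pYC pS v * concatFeat dc ds v i * concatFeat dc ds v j))
    (hint2p : ∀ i j, Integrable (fun v : ℝ × (Fin dc → ℝ) × (Fin ds → ℝ) =>
      p v * concatFeat dc ds v i * concatFeat dc ds v j))
    -- z_c and z_s are centered under P_w
    (hcc : ∀ i, (∫ v : ℝ × (Fin dc → ℝ) × (Fin ds → ℝ),
      reweightedDensity dc ds p pYC pS v * v.2.1 i) = 0)
    (hcs : ∀ j, (∫ v : ℝ × (Fin dc → ℝ) × (Fin ds → ℝ),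
      reweightedDensity dc ds p pYC pS v * v.2.2 j) = 0) :
    (Matrix.of fun i j : Fin dc ⊕ Fin ds =>
      ∫ v : ℝ × (Fin dc → ℝ) × (Fin ds → ℝ),
        reweightedDensity dc ds p pYC pS v * concatFeat dc ds v i * concatFeat dc ds v j) =
    Matrix.fromBlocks
      (Matrix.of fun i j : Fin dc =>
        ∫ v : ℝ × (Fin dc → ℝ) × (Fin ds → ℝ), p v * v.2.1 i * v.2.1 j)
      0 0
      (Matrix.of fun i j : Fin ds =>
        ∫ v : ℝ × (Fin dc → ℝ) × (Fin ds → ℝ), p v * v.2.2 i * v.2.2 j) := by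
  -- the weight times the density is the product of the marginals
  have hw : ∀ v : ℝ × (Fin dc → ℝ) × (Fin ds → ℝ), reweightedDensity dc ds p pYC pS v
      = pYC (v.1, v.2.1) * pS v.2.2 := by
    intro v
    unfold reweightedDensity
    rw [div_mul_cancel₀ _ (hpos v).ne']
  -- marginalization over the last coordinate
  have hmargYC : ∀ f : (Fin dc → ℝ) → ℝ, Integrable (fun v : ℝ × (Fin dc → ℝ) × (Fin ds → ℝ) => p v * f v.2.1) →
      (∫ w : ℝ × (Fin dc → ℝ), pYC w * f w.2) = ∫ v : ℝ × (Fin dc → ℝ) × (Fin ds → ℝ), p v * f v.2.1 := by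
    intro f hf
    rw [split_last _ hf]
    congr 1
    funext w
    obtain ⟨y, zc⟩ := w
    show pYC (y, zc) * f zc = ∫ z : (Fin ds → ℝ), p (y, zc, z) * f zc
    rw [hYC y zc, integral_mul_const]
  -- marginalization over the first two coordinates
  have hmargS : ∀ g : (Fin ds → ℝ) → ℝ, Integrable (fun v : ℝ × (Fin dc → ℝ) × (Fin ds → ℝ) => p v * g v.2.2) →
      (∫ z : (Fin ds → ℝ), pS z * g z) = ∫ v : ℝ × (Fin dc → ℝ) × (Fin ds → ℝ), p v * g v.2.2 := by
    intro g hg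
    rw [split_first _ hg]
    -- a.e. integrability of the sections of p
    have hsec : ∀ᵐ z : (Fin ds → ℝ), Integrable (fun w : ℝ × (Fin dc → ℝ) => p (w.1, w.2, z)) := by
      have h1 : Integrable (fun w : (ℝ × (Fin dc → ℝ)) × (Fin ds → ℝ) => p (w.1.1, w.1.2, w.2)) :=
        integrable_assoc hint
      rw [Measure.volume_eq_prod] at h1
      exact h1.prod_left_ae
    refine integral_congr_ae ?_
    filter_upwards [hsec] with z hz
    show pS z * g z = ∫ w : ℝ × (Fin dc → ℝ), p (w.1, w.2, z) * g z
    rw [integral_mul_const]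
    congr 1
    have : (∫ w : ℝ × (Fin dc → ℝ), p (w.1, w.2, z)) = ∫ y : ℝ, ∫ zc : (Fin dc → ℝ), p (y, zc, z) := by
      rw [Measure.volume_eq_prod, integral_prod _ (by exact hz)]
    rw [hS z, this]
  -- both marginals are normalized
  have hpS1 : (∫ z : (Fin ds → ℝ), pS z) = 1 := by
    have := hmargS (fun _ => 1) (by simpa using hint)
    simpa [hnorm] using this
  have hpYC1 : (∫ w : ℝ × (Fin dc → ℝ), pYC w) = 1 := by
    have := hmargYC (fun _ => 1) (by simpa using hint)
    simpa [hnorm] using this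
  -- centering transfers to the marginals
  have hcc' : ∀ i, (∫ w : ℝ × (Fin dc → ℝ), pYC w * w.2 i) = 0 := by
    intro i
    have h0 := hcc i
    rw [show (fun v : ℝ × (Fin dc → ℝ) × (Fin ds → ℝ) => reweightedDensity dc ds p pYC pS v * v.2.1 i)
        = fun v : ℝ × (Fin dc → ℝ) × (Fin ds → ℝ) => (fun w : ℝ × (Fin dc → ℝ) => pYC w * w.2 i) (v.1, v.2.1) * pS v.2.2 from
      funext fun v => by rw [hw v]; ring] at h0
    rwa [factor_integral (fun w : ℝ × (Fin dc → ℝ) => pYC w * w.2 i) pS, hpS1, mul_one] at h0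
  have hcs' : ∀ j, (∫ z : (Fin ds → ℝ), pS z * z j) = 0 := by
    intro j
    have h0 := hcs j
    rw [show (fun v : ℝ × (Fin dc → ℝ) × (Fin ds → ℝ) => reweightedDensity dc ds p pYC pS v * v.2.2 j)
        = fun v : ℝ × (Fin dc → ℝ) × (Fin ds → ℝ) => pYC (v.1, v.2.1) * (fun z : (Fin ds → ℝ) => pS z * z j) v.2.2 from
      funext fun v => by rw [hw v]; ring] at h0
    rwa [factor_integral pYC (fun z : Fin ds → ℝ => pS z * z j), hpYC1, one_mul] at h0
  ext i j
  cases i with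
  | inl i =>
    cases j with
    | inl j =>
      show (∫ v : ℝ × (Fin dc → ℝ) × (Fin ds → ℝ), reweightedDensity dc ds p pYC pS v
          * concatFeat dc ds v (Sum.inl i) * concatFeat dc ds v (Sum.inl j))
        = ∫ v : ℝ × (Fin dc → ℝ) × (Fin ds → ℝ), p v * v.2.1 i * v.2.1 j
      rw [show (fun v : ℝ × (Fin dc → ℝ) × (Fin ds → ℝ) => reweightedDensity dc ds p pYC pS v
            * concatFeat dc ds v (Sum.inl i) * concatFeat dc ds v (Sum.inl j))
          = fun v : ℝ × (Fin dc → ℝ) × (Fin ds → ℝ) => (fun w : ℝ × (Fin dc → ℝ) => pYC w * (w.2 i * w.2 j)) (v.1, v.2.1)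
              * pS v.2.2 from
        funext fun v => by simp only [concatFeat, Sum.elim_inl]; rw [hw v]; ring]
      rw [factor_integral (fun w : ℝ × (Fin dc → ℝ) => pYC w * (w.2 i * w.2 j)) pS, hpS1, mul_one]
      rw [hmargYC (fun zc => zc i * zc j) (by
        have := hint2p (Sum.inl i) (Sum.inl j)
        rw [show (fun v : ℝ × (Fin dc → ℝ) × (Fin ds → ℝ) => p v * concatFeat dc ds v (Sum.inl i)
              * concatFeat dc ds v (Sum.inl j))
            = fun v : ℝ × (Fin dc → ℝ) × (Fin ds → ℝ) => p v * (v.2.1 i * v.2.1 j) from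
          funext fun v => by simp only [concatFeat, Sum.elim_inl]; ring] at this
        exact this)]
      congr 1
      funext v
      ring
    | inr j =>
      show (∫ v : ℝ × (Fin dc → ℝ) × (Fin ds → ℝ), reweightedDensity dc ds p pYC pS v
          * concatFeat dc ds v (Sum.inl i) * concatFeat dc ds v (Sum.inr j)) = 0
      rw [show (fun v : ℝ × (Fin dc → ℝ) × (Fin ds → ℝ) => reweightedDensity dc ds p pYC pS v
            * concatFeat dc ds v (Sum.inl i) * concatFeat dc ds v (Sum.inr j))
          = fun v : ℝ × (Fin dc → ℝ) × (Fin ds → ℝ) => (fun w : ℝ × (Fin dc → ℝ) => pYC w * w.2 i) (v.1, v.2.1)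
              * (fun z : (Fin ds → ℝ) => pS z * z j) v.2.2 from
        funext fun v => by simp only [concatFeat, Sum.elim_inl, Sum.elim_inr]; rw [hw v]; ring]
      rw [factor_integral (fun w : ℝ × (Fin dc → ℝ) => pYC w * w.2 i)
        (fun z : Fin ds → ℝ => pS z * z j), hcc' i, zero_mul]
  | inr i =>
    cases j with
    | inl j =>
      show (∫ v : ℝ × (Fin dc → ℝ) × (Fin ds → ℝ), reweightedDensity dc ds p pYC pS v
          * concatFeat dc ds v (Sum.inr i) * concatFeat dc ds v (Sum.inl j)) = 0
      rw [show (fun v : ℝ × (Fin dc → ℝ) × (Fin ds → ℝ) => reweightedDensity dc ds p pYC pS v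
            * concatFeat dc ds v (Sum.inr i) * concatFeat dc ds v (Sum.inl j))
          = fun v : ℝ × (Fin dc → ℝ) × (Fin ds → ℝ) => (fun w : ℝ × (Fin dc → ℝ) => pYC w * w.2 j) (v.1, v.2.1)
              * (fun z : (Fin ds → ℝ) => pS z * z i) v.2.2 from
        funext fun v => by simp only [concatFeat, Sum.elim_inl, Sum.elim_inr]; rw [hw v]; ring]
      rw [factor_integral (fun w : ℝ × (Fin dc → ℝ) => pYC w * w.2 j)
        (fun z : Fin ds → ℝ => pS z * z i), hcc' j, zero_mul]
    | inr j =>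
      show (∫ v : ℝ × (Fin dc → ℝ) × (Fin ds → ℝ), reweightedDensity dc ds p pYC pS v
          * concatFeat dc ds v (Sum.inr i) * concatFeat dc ds v (Sum.inr j))
        = ∫ v : ℝ × (Fin dc → ℝ) × (Fin ds → ℝ), p v * v.2.2 i * v.2.2 j
      rw [show (fun v : ℝ × (Fin dc → ℝ) × (Fin ds → ℝ) => reweightedDensity dc ds p pYC pS v
            * concatFeat dc ds v (Sum.inr i) * concatFeat dc ds v (Sum.inr j))
          = fun v : ℝ × (Fin dc → ℝ) × (Fin ds → ℝ) => (fun w : ℝ × (Fin dc → ℝ) => pYC w) (v.1, v.2.1)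
              * (fun z : (Fin ds → ℝ) => pS z * (z i * z j)) v.2.2 from
        funext fun v => by simp only [concatFeat, Sum.elim_inr]; rw [hw v]; ring]
      rw [factor_integral pYC (fun z : Fin ds → ℝ => pS z * (z i * z j)), hpYC1, one_mul]
      rw [hmargS (fun z => z i * z j) (by
        have := hint2p (Sum.inr i) (Sum.inr j)
        rw [show (fun v : ℝ × (Fin dc → ℝ) × (Fin ds → ℝ) => p v * concatFeat dc ds v (Sum.inr i)
              * concatFeat dc ds v (Sum.inr j))
            = fun v : ℝ × (Fin dc → ℝ) × (Fin ds → ℝ) => p v * (v.2.2 i * v.2.2 j) from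
          funext fun v => by simp only [concatFeat, Sum.elim_inr]; ring] at this
        exact this)]
      congr 1
      funext v
      ring
end

section
/- Suppose P(y, z_c, z_s) > 0 everywhere, the transformation x = S[z_c; z_s] is invertible with inverse T, and under the weight w := P(y, z_c)·P(z_s)/P(y, z_c, z_s) the features are centered (E_w[z_c]=0, E_w[z_s]=0) with invertible marginal second moment matrices Σ_c and Σ_s. Then the minimizer θ*(w) of the weighted population least squares loss E[w·(y − x^⊤θ)²] equals the optimal debiased predictor θ̄ := T^⊤[θ̄_c; 0], where θ̄_c := argmin_{θ_c} E[(y − z_c^⊤ θ_c)²] = Σ_c^{-1} E[z_c y]. In particular, the weighted OLS solution places no weight on the spurious features z_s. -/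
/-!
Since `P > 0`, the weight `w` turns `P` into the product `P(y, z_c) · P(z_s)` of two of its
marginals. Under this decoupled law `z_s` is independent of `(y, z_c)` and centred, so the second
moment matrix of `z = [z_c; z_s]` is `diag(Σ_c, Σ_s)` and `E[y z] = [E[z_c y]; 0]`. Since
`x^⊤θ = z^⊤(S^⊤θ)`, the weighted loss is an ordinary least-squares loss in `u = S^⊤θ`; its normal
equations have the unique solution `[Σ_c⁻¹ E[z_c y]; 0] = S^⊤θ̄`, and the loss exceeds its minimum
by the positive definite quadratic form `(u - S^⊤θ̄)^⊤ diag(Σ_c, Σ_s) (u - S^⊤θ̄)`.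
-/

open MeasureTheory

/-- The observed feature `x = S [z_c; z_s]`. -/
def obsFeat (dc ds : ℕ) (S : Matrix (Fin dc ⊕ Fin ds) (Fin dc ⊕ Fin ds) ℝ)
    (v : ℝ × (Fin dc → ℝ) × (Fin ds → ℝ)) : Fin dc ⊕ Fin ds → ℝ :=
  S.mulVec (Sum.elim v.2.1 v.2.2)

open ENNReal Matrix

namespace MeasureTheory

namespace Measure

variable {α β : Type*} [MeasurableSpace α] [MeasurableSpace β] {μ : Measure α} {ν : Measure β}

theorem fst_withDensity_prod [SFinite μ] [SFinite ν] {f : α × β → ℝ≥0∞}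
    (hf : AEMeasurable f (μ.prod ν)) :
    ((μ.prod ν).withDensity f).fst = μ.withDensity fun a => ∫⁻ b, f (a, b) ∂ν := by
  ext s hs
  have hf' := hf.restrict (s := s ×ˢ Set.univ)
  rw [← prod_restrict, restrict_univ] at hf'
  rw [fst_apply hs, withDensity_apply _ (measurable_fst hs), withDensity_apply _ hs,
    ← Set.prod_univ, ← prod_restrict, restrict_univ, lintegral_prod _ hf']

theorem snd_withDensity_prod [SFinite μ] [SFinite ν] {f : α × β → ℝ≥0∞}
    (hf : AEMeasurable f (μ.prod ν)) :
    ((μ.prod ν).withDensity f).snd = ν.withDensity fun b => ∫⁻ a, f (a, b) ∂μ := by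
  ext s hs
  have hf' := hf.restrict (s := Set.univ ×ˢ s)
  rw [← prod_restrict, restrict_univ] at hf'
  rw [snd_apply hs, withDensity_apply _ (measurable_snd hs), withDensity_apply _ hs,
    ← Set.univ_prod, ← prod_restrict, restrict_univ, lintegral_prod_symm _ hf']

section RealDensity

variable {f : α × β → ℝ} {g : α → ℝ} {h : β → ℝ}

theorem aemeasurable_of_ae_eq_integral_right [SFinite ν] (hf : Integrable f (μ.prod ν))
    (hg : g =ᵐ[μ] fun a => ∫ b, f (a, b) ∂ν) : AEMeasurable g μ :=
  hf.1.integral_prod_right'.aemeasurable.congr hg.symm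

theorem aemeasurable_of_ae_eq_integral_left [SFinite μ] [SFinite ν] (hf : Integrable f (μ.prod ν))
    (hh : h =ᵐ[ν] fun b => ∫ a, f (a, b) ∂μ) : AEMeasurable h ν :=
  hf.1.prod_swap.integral_prod_right'.aemeasurable.congr hh.symm

theorem fst_withDensity_ofReal_prod [SFinite μ] [SFinite ν] (hf : Integrable f (μ.prod ν))
    (hf0 : 0 ≤ f) (hg : g =ᵐ[μ] fun a => ∫ b, f (a, b) ∂ν) :
    ((μ.prod ν).withDensity fun z => .ofReal (f z)).fst = μ.withDensity fun a => .ofReal (g a) := by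
  rw [fst_withDensity_prod hf.1.aemeasurable.ennreal_ofReal]
  refine withDensity_congr_ae ?_
  filter_upwards [hg, hf.prod_right_ae] with a hga hfa
  rw [hga, ofReal_integral_eq_lintegral_ofReal hfa (ae_of_all _ fun b => hf0 _)]

theorem snd_withDensity_ofReal_prod [SFinite μ] [SFinite ν] (hf : Integrable f (μ.prod ν))
    (hf0 : 0 ≤ f) (hh : h =ᵐ[ν] fun b => ∫ a, f (a, b) ∂μ) :
    ((μ.prod ν).withDensity fun z => .ofReal (f z)).snd = ν.withDensity fun b => .ofReal (h b) := by
  rw [snd_withDensity_prod hf.1.aemeasurable.ennreal_ofReal]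
  refine withDensity_congr_ae ?_
  filter_upwards [hh, hf.prod_left_ae] with b hhb hfb
  rw [hhb, ofReal_integral_eq_lintegral_ofReal hfb (ae_of_all _ fun a => hf0 _)]

theorem withDensity_mul_marginals_eq_prod_fst_snd [SFinite μ] [SFinite ν]
    (hf : Integrable f (μ.prod ν)) (hf0 : 0 ≤ f) (hg0 : 0 ≤ g)
    (hg : g =ᵐ[μ] fun a => ∫ b, f (a, b) ∂ν) (hh : h =ᵐ[ν] fun b => ∫ a, f (a, b) ∂μ) :
    (μ.prod ν).withDensity (fun z => .ofReal (g z.1 * h z.2)) =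
      ((μ.prod ν).withDensity fun z => .ofReal (f z)).fst.prod
        ((μ.prod ν).withDensity fun z => .ofReal (f z)).snd := by
  rw [fst_withDensity_ofReal_prod hf hf0 hg, snd_withDensity_ofReal_prod hf hf0 hh,
    prod_withDensity₀ (aemeasurable_of_ae_eq_integral_right hf hg).ennreal_ofReal
      (aemeasurable_of_ae_eq_integral_left hf hh).ennreal_ofReal]
  simp only [ofReal_mul (hg0 _)]

end RealDensity

section ProductOfMarginals

variable {ρ : Measure (α × β)} {g : α → ℝ} {h : β → ℝ}

theorem integral_comp_fst_prod_fst_snd [IsProbabilityMeasure ρ]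
    (hg : AEStronglyMeasurable g ρ.fst) : ∫ z, g z.1 ∂ρ.fst.prod ρ.snd = ∫ z, g z.1 ∂ρ := by
  rw [integral_fun_fst, probReal_univ, one_smul, Measure.fst,
    integral_map measurable_fst.aemeasurable hg]

theorem integral_comp_snd_prod_fst_snd [IsProbabilityMeasure ρ]
    (hh : AEStronglyMeasurable h ρ.snd) : ∫ z, h z.2 ∂ρ.fst.prod ρ.snd = ∫ z, h z.2 ∂ρ := by
  rw [integral_fun_snd, probReal_univ, one_smul, Measure.snd,
    integral_map measurable_snd.aemeasurable hh]

theorem integral_mul_prod_fst_snd [SFinite ρ] (hg : AEStronglyMeasurable g ρ.fst)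
    (hh : AEStronglyMeasurable h ρ.snd) :
    ∫ z, g z.1 * h z.2 ∂ρ.fst.prod ρ.snd = (∫ z, g z.1 ∂ρ) * ∫ z, h z.2 ∂ρ := by
  rw [integral_prod_mul, Measure.fst, Measure.snd, integral_map measurable_fst.aemeasurable hg,
    integral_map measurable_snd.aemeasurable hh]

end ProductOfMarginals

end Measure

namespace MeasurePreserving

variable {X Y : Type*} [MeasurableSpace X] [MeasurableSpace Y] {μ : Measure X} {ν : Measure Y}
  {e : X ≃ᵐ Y} {w : Y → ℝ}

theorem integral_mul_eq_integral_withDensity (he : MeasurePreserving e μ ν)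
    (hw : AEMeasurable (fun x => w (e x)) μ) (hw0 : 0 ≤ w) (F : Y → ℝ) :
    ∫ y, w y * F y ∂ν = ∫ x, F (e x) ∂μ.withDensity fun x => .ofReal (w (e x)) := by
  rw [integral_withDensity_eq_integral_toReal_smul₀ hw.ennreal_ofReal
    (ae_of_all _ fun _ => ofReal_lt_top), ← he.integral_comp']
  simp only [toReal_ofReal (hw0 _), smul_eq_mul]

theorem integrable_mul_iff_integrable_withDensity (he : MeasurePreserving e μ ν)
    (hw : AEMeasurable (fun x => w (e x)) μ) (hw0 : 0 ≤ w) {F : Y → ℝ} :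
    Integrable (fun y => w y * F y) ν ↔
      Integrable (fun x => F (e x)) (μ.withDensity fun x => .ofReal (w (e x))) := by
  rw [integrable_withDensity_iff_integrable_smul₀' hw.ennreal_ofReal
    (ae_of_all _ fun _ => ofReal_lt_top), ← he.integrable_comp_emb e.measurableEmbedding]
  simp only [Function.comp_def, toReal_ofReal (hw0 _), smul_eq_mul]

end MeasurePreserving

section ProdAssoc

variable {α β γ : Type*} [MeasureSpace α] [MeasureSpace β] [MeasureSpace γ]
  [SFinite (volume : Measure β)] [SFinite (volume : Measure γ)]

theorem integral_comp_prodAssoc (F : α × β × γ → ℝ) :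
    ∫ z : (α × β) × γ, F (z.1.1, z.1.2, z.2) = ∫ v, F v :=
  volume_preserving_prodAssoc.integral_comp' F

theorem integrable_comp_prodAssoc_iff {F : α × β × γ → ℝ} :
    Integrable (fun z : (α × β) × γ => F (z.1.1, z.1.2, z.2)) ↔ Integrable F :=
  volume_preserving_prodAssoc.integrable_comp_emb MeasurableEquiv.prodAssoc.measurableEmbedding

end ProdAssoc

end MeasureTheory

theorem Matrix.transpose_mulVec_transpose_mulVec_of_mul_eq_one {n R : Type*} [Fintype n]
    [DecidableEq n] [CommSemiring R] {A B : Matrix n n R} (h : A * B = 1) (u : n → R) :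
    Bᵀ *ᵥ Aᵀ *ᵥ u = u := by
  rw [mulVec_mulVec, ← transpose_mul, h, transpose_one, one_mulVec]

section LeastSquares

variable {Ω ι : Type*} [MeasurableSpace Ω] [Fintype ι] {μ : Measure Ω} {Y : Ω → ℝ}
  {Z : Ω → ι → ℝ}

noncomputable def momentMatrix (μ : Measure Ω) (Z : Ω → ι → ℝ) : Matrix ι ι ℝ :=
  Matrix.of fun k l => ∫ ω, Z ω k * Z ω l ∂μ

noncomputable def crossMoment (μ : Measure Ω) (Y : Ω → ℝ) (Z : Ω → ι → ℝ) : ι → ℝ :=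
  fun k => ∫ ω, Y ω * Z ω k ∂μ

lemma memLp_dotProduct (hZ : ∀ k, MemLp (fun ω => Z ω k) 2 μ) (u : ι → ℝ) :
    MemLp (fun ω => Z ω ⬝ᵥ u) 2 μ := by
  simpa only [dotProduct] using memLp_finsetSum Finset.univ fun k _ => (hZ k).mul_const (u k)

lemma integral_mul_dotProduct {X : Ω → ℝ} (hX : MemLp X 2 μ)
    (hZ : ∀ k, MemLp (fun ω => Z ω k) 2 μ) (u : ι → ℝ) :
    ∫ ω, X ω * (Z ω ⬝ᵥ u) ∂μ = crossMoment μ X Z ⬝ᵥ u := by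
  have hint : ∀ k, Integrable (fun ω => X ω * Z ω k * u k) μ :=
    fun k => (hX.integrable_mul (hZ k)).mul_const (u k)
  simp only [dotProduct, Finset.mul_sum, ← mul_assoc, crossMoment]
  rw [integral_finsetSum _ fun k _ => hint k]
  simp only [integral_mul_const]

lemma crossMoment_dotProduct (hZ : ∀ k, MemLp (fun ω => Z ω k) 2 μ) (u : ι → ℝ) :
    crossMoment μ (fun ω => Z ω ⬝ᵥ u) Z = momentMatrix μ Z *ᵥ u := by
  ext k
  simp only [crossMoment, mul_comm _ (Z _ k)]
  exact integral_mul_dotProduct (hZ k) hZ u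

lemma integral_dotProduct_mul_dotProduct (hZ : ∀ k, MemLp (fun ω => Z ω k) 2 μ)
    (u w : ι → ℝ) :
    ∫ ω, (Z ω ⬝ᵥ u) * (Z ω ⬝ᵥ w) ∂μ = u ⬝ᵥ momentMatrix μ Z *ᵥ w := by
  simp only [mul_comm (Z _ ⬝ᵥ u)]
  rw [integral_mul_dotProduct (memLp_dotProduct hZ w) hZ, crossMoment_dotProduct hZ,
    dotProduct_comm]

lemma crossMoment_sub_dotProduct (hY : MemLp Y 2 μ) (hZ : ∀ k, MemLp (fun ω => Z ω k) 2 μ)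
    (u : ι → ℝ) :
    crossMoment μ (fun ω => Y ω - Z ω ⬝ᵥ u) Z = crossMoment μ Y Z - momentMatrix μ Z *ᵥ u := by
  ext k
  rw [← crossMoment_dotProduct hZ]
  simp only [crossMoment, sub_mul, Pi.sub_apply]
  exact integral_sub (hY.integrable_mul (hZ k)) ((memLp_dotProduct hZ u).integrable_mul (hZ k))

theorem momentMatrix_posSemidef (hZ : ∀ k, MemLp (fun ω => Z ω k) 2 μ) :
    (momentMatrix μ Z).PosSemidef := by
  refine Matrix.PosSemidef.of_dotProduct_mulVec_nonneg ?_ fun u => ?_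
  · ext k l
    simp only [conjTranspose_apply, star_trivial, momentMatrix, of_apply, mul_comm]
  · rw [star_trivial, ← integral_dotProduct_mul_dotProduct hZ]
    exact integral_nonneg fun ω => mul_self_nonneg _

theorem integral_sq_sub_dotProduct_eq (hY : MemLp Y 2 μ) (hZ : ∀ k, MemLp (fun ω => Z ω k) 2 μ)
    {u₀ : ι → ℝ} (hu₀ : momentMatrix μ Z *ᵥ u₀ = crossMoment μ Y Z) (u : ι → ℝ) :
    ∫ ω, (Y ω - Z ω ⬝ᵥ u) ^ 2 ∂μ =
      ∫ ω, (Y ω - Z ω ⬝ᵥ u₀) ^ 2 ∂μ + (u - u₀) ⬝ᵥ momentMatrix μ Z *ᵥ (u - u₀) := by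
  have hres : MemLp (fun ω => Y ω - Z ω ⬝ᵥ u₀) 2 μ := hY.sub (memLp_dotProduct hZ u₀)
  have hd := memLp_dotProduct hZ (u - u₀)
  have horth : ∫ ω, (Y ω - Z ω ⬝ᵥ u₀) * (Z ω ⬝ᵥ (u - u₀)) ∂μ = 0 := by
    rw [integral_mul_dotProduct hres hZ, crossMoment_sub_dotProduct hY hZ, hu₀, sub_self,
      zero_dotProduct]
  have hexpand : ∀ ω, (Y ω - Z ω ⬝ᵥ u) ^ 2 = (Y ω - Z ω ⬝ᵥ u₀) ^ 2
      - 2 * ((Y ω - Z ω ⬝ᵥ u₀) * (Z ω ⬝ᵥ (u - u₀))) + (Z ω ⬝ᵥ (u - u₀)) * (Z ω ⬝ᵥ (u - u₀)) := by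
    intro ω; rw [dotProduct_sub]; ring
  have hsq : Integrable (fun ω => (Y ω - Z ω ⬝ᵥ u₀) ^ 2) μ := hres.integrable_sq
  have hcross : Integrable (fun ω => 2 * ((Y ω - Z ω ⬝ᵥ u₀) * (Z ω ⬝ᵥ (u - u₀)))) μ :=
    (hres.integrable_mul hd).const_mul 2
  have hquad : Integrable (fun ω => (Z ω ⬝ᵥ (u - u₀)) * (Z ω ⬝ᵥ (u - u₀))) μ :=
    hd.integrable_mul hd
  have hsq_sub : Integrable (fun ω => (Y ω - Z ω ⬝ᵥ u₀) ^ 2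
      - 2 * ((Y ω - Z ω ⬝ᵥ u₀) * (Z ω ⬝ᵥ (u - u₀)))) μ := hsq.sub hcross
  simp only [hexpand]
  rw [integral_add hsq_sub hquad, integral_sub hsq hcross, integral_const_mul, horth,
    integral_dotProduct_mul_dotProduct hZ, mul_zero, sub_zero]

theorem integral_sq_sub_dotProduct_unique_min [DecidableEq ι] (hY : MemLp Y 2 μ)
    (hZ : ∀ k, MemLp (fun ω => Z ω k) 2 μ) (hM : IsUnit (momentMatrix μ Z))
    {u₀ : ι → ℝ} (hu₀ : momentMatrix μ Z *ᵥ u₀ = crossMoment μ Y Z) (u : ι → ℝ) :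
    ∫ ω, (Y ω - Z ω ⬝ᵥ u₀) ^ 2 ∂μ ≤ ∫ ω, (Y ω - Z ω ⬝ᵥ u) ^ 2 ∂μ ∧
      (∫ ω, (Y ω - Z ω ⬝ᵥ u) ^ 2 ∂μ = ∫ ω, (Y ω - Z ω ⬝ᵥ u₀) ^ 2 ∂μ → u = u₀) := by
  have hPD := (momentMatrix_posSemidef hZ).posDef_iff_isUnit.mpr hM
  rw [integral_sq_sub_dotProduct_eq hY hZ hu₀ u]
  refine ⟨le_add_of_nonneg_right ?_, fun h => ?_⟩
  · simpa only [star_trivial] using (momentMatrix_posSemidef hZ).dotProduct_mulVec_nonneg (u - u₀)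
  · by_contra hne
    have := hPD.dotProduct_mulVec_pos (sub_ne_zero.mpr hne)
    rw [star_trivial] at this
    linarith

lemma memLp_two_of_integrable_sq_sub_dotProduct (hY : AEStronglyMeasurable Y μ)
    (hZ : AEStronglyMeasurable Z μ)
    (h : ∀ u, Integrable (fun ω => (Y ω - Z ω ⬝ᵥ u) ^ 2) μ) :
    MemLp Y 2 μ ∧ ∀ k, MemLp (fun ω => Z ω k) 2 μ := by
  classical
  have hYL : MemLp Y 2 μ := (memLp_two_iff_integrable_sq hY).2 (by simpa using h 0)
  refine ⟨hYL, fun k => ?_⟩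
  have hres : MemLp (fun ω => Y ω - Z ω k) 2 μ :=
    (memLp_two_iff_integrable_sq (hY.sub ((continuous_apply k).comp_aestronglyMeasurable hZ))).2
      (by simpa [dotProduct_single] using h (Pi.single k 1))
  convert hYL.sub hres using 1
  ext ω
  simp

end LeastSquares

section DebiasedPredictor

variable {dc ds : ℕ}

/-- The law of `((y, z_c), z_s)` under `P`, bracketed so that the `(y, z_c)`- and `z_s`-marginals
are `Measure.fst` and `Measure.snd`. -/
noncomputable def jointLaw (p : ℝ × (Fin dc → ℝ) × (Fin ds → ℝ) → ℝ) :
    Measure ((ℝ × (Fin dc → ℝ)) × (Fin ds → ℝ)) :=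
  volume.withDensity fun z => .ofReal (p (z.1.1, z.1.2, z.2))

/-- The law `P(y, z_c) · P(z_s)` produced by the weight `w`. -/
noncomputable def decoupledLaw (p : ℝ × (Fin dc → ℝ) × (Fin ds → ℝ) → ℝ) :
    Measure ((ℝ × (Fin dc → ℝ)) × (Fin ds → ℝ)) :=
  (jointLaw p).fst.prod (jointLaw p).snd

def latentFeat (z : (ℝ × (Fin dc → ℝ)) × (Fin ds → ℝ)) : Fin dc ⊕ Fin ds → ℝ :=
  Sum.elim z.1.2 z.2

lemma continuous_latentFeat : Continuous (latentFeat (dc := dc) (ds := ds)) := by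
  refine continuous_pi fun k => ?_
  cases k <;> simp only [latentFeat, Sum.elim_inl, Sum.elim_inr] <;> fun_prop

lemma obsFeat_dotProduct (S : Matrix (Fin dc ⊕ Fin ds) (Fin dc ⊕ Fin ds) ℝ)
    (z : (ℝ × (Fin dc → ℝ)) × (Fin ds → ℝ)) (θ : Fin dc ⊕ Fin ds → ℝ) :
    obsFeat dc ds S (z.1.1, z.1.2, z.2) ⬝ᵥ θ = latentFeat z ⬝ᵥ Sᵀ *ᵥ θ := by
  rw [obsFeat, dotProduct_comm, dotProduct_mulVec, mulVec_transpose, dotProduct_comm]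
  rfl

variable {p : ℝ × (Fin dc → ℝ) × (Fin ds → ℝ) → ℝ}

lemma isProbabilityMeasure_jointLaw (hp0 : 0 ≤ p) (hint : Integrable p) (hnorm : ∫ v, p v = 1) :
    IsProbabilityMeasure (jointLaw p) := by
  refine ⟨?_⟩
  rw [jointLaw, withDensity_apply _ MeasurableSet.univ, Measure.restrict_univ,
    ← ofReal_integral_eq_lintegral_ofReal (integrable_comp_prodAssoc_iff.mpr hint)
      (ae_of_all _ fun _ => hp0 _), integral_comp_prodAssoc, hnorm, ofReal_one]

lemma integral_mul_eq_integral_jointLaw (hp0 : 0 ≤ p) (hint : Integrable p)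
    (F : ℝ × (Fin dc → ℝ) × (Fin ds → ℝ) → ℝ) :
    ∫ v, p v * F v = ∫ z, F (z.1.1, z.1.2, z.2) ∂jointLaw p :=
  volume_preserving_prodAssoc.integral_mul_eq_integral_withDensity
    (integrable_comp_prodAssoc_iff.mpr hint).1.aemeasurable hp0 F

section Moments

variable [IsProbabilityMeasure (jointLaw p)]

lemma momentMatrix_decoupledLaw (hp0 : 0 ≤ p) (hint : Integrable p)
    (hmean : ∀ j, ∫ z, z.2 j ∂jointLaw p = 0) :
    momentMatrix (decoupledLaw p) latentFeat =
      fromBlocks (of fun i j => ∫ v, p v * v.2.1 i * v.2.1 j) 0 0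
        (of fun i j => ∫ v, p v * v.2.2 i * v.2.2 j) := by
  ext (i | j) (i' | j') <;>
    simp only [momentMatrix, latentFeat, of_apply, Sum.elim_inl, Sum.elim_inr, fromBlocks_apply₁₁,
      fromBlocks_apply₁₂, fromBlocks_apply₂₁, fromBlocks_apply₂₂, Matrix.zero_apply, mul_assoc,
      integral_mul_eq_integral_jointLaw hp0 hint, decoupledLaw]
  · exact Measure.integral_comp_fst_prod_fst_snd (g := fun a : ℝ × (Fin dc → ℝ) => a.2 i * a.2 i')
      (by fun_prop)
  · rw [Measure.integral_mul_prod_fst_snd (g := fun a : ℝ × (Fin dc → ℝ) => a.2 i)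
      (h := fun b : Fin ds → ℝ => b j') (by fun_prop) (measurable_pi_apply j').aestronglyMeasurable,
      hmean, mul_zero]
  · conv_lhs => enter [2, ω]; rw [mul_comm]
    rw [Measure.integral_mul_prod_fst_snd (g := fun a : ℝ × (Fin dc → ℝ) => a.2 i')
      (h := fun b : Fin ds → ℝ => b j) (by fun_prop) (measurable_pi_apply j).aestronglyMeasurable,
      hmean, mul_zero]
  · exact Measure.integral_comp_snd_prod_fst_snd (h := fun b : Fin ds → ℝ => b j * b j')
      (by fun_prop)

lemma crossMoment_decoupledLaw (hp0 : 0 ≤ p) (hint : Integrable p)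
    (hmean : ∀ j, ∫ z, z.2 j ∂jointLaw p = 0) :
    crossMoment (decoupledLaw p) (fun z => z.1.1) latentFeat =
      Sum.elim (fun i => ∫ v, p v * v.2.1 i * v.1) 0 := by
  ext (i | j) <;>
    simp only [crossMoment, latentFeat, Sum.elim_inl, Sum.elim_inr, Pi.zero_apply, mul_assoc,
      integral_mul_eq_integral_jointLaw hp0 hint, decoupledLaw]
  · conv_lhs => enter [2, z]; rw [mul_comm]
    exact Measure.integral_comp_fst_prod_fst_snd (g := fun a : ℝ × (Fin dc → ℝ) => a.2 i * a.1)
      (by fun_prop)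
  · rw [Measure.integral_mul_prod_fst_snd (g := fun a : ℝ × (Fin dc → ℝ) => a.1)
      (h := fun b : Fin ds → ℝ => b j) (by fun_prop) (measurable_pi_apply j).aestronglyMeasurable,
      hmean, mul_zero]

end Moments

variable {pYC : ℝ × (Fin dc → ℝ) → ℝ} {pS : (Fin ds → ℝ) → ℝ}

lemma reweightedDensity_comp_prodAssoc (hpos : ∀ v, 0 < p v)
    (z : (ℝ × (Fin dc → ℝ)) × (Fin ds → ℝ)) :
    reweightedDensity dc ds p pYC pS (z.1.1, z.1.2, z.2) = pYC z.1 * pS z.2 :=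
  div_mul_cancel₀ _ (hpos _).ne'

lemma reweightedDensity_nonneg (hpos : ∀ v, 0 < p v)
    (hYC : ∀ y zc, pYC (y, zc) = ∫ zs, p (y, zc, zs))
    (hS : ∀ zs, pS zs = ∫ y : ℝ, ∫ zc : Fin dc → ℝ, p (y, zc, zs)) :
    0 ≤ reweightedDensity dc ds p pYC pS := fun v => by
  simp only [reweightedDensity, div_mul_cancel₀ _ (hpos v).ne', hYC, hS]
  exact mul_nonneg (integral_nonneg fun _ => (hpos _).le)
    (integral_nonneg fun _ => integral_nonneg fun _ => (hpos _).le)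

lemma pS_ae_eq_integral (hint : Integrable p)
    (hS : ∀ zs, pS zs = ∫ y : ℝ, ∫ zc : Fin dc → ℝ, p (y, zc, zs)) :
    pS =ᵐ[volume] fun zs => ∫ a : ℝ × (Fin dc → ℝ), p (a.1, a.2, zs) := by
  filter_upwards [(integrable_comp_prodAssoc_iff.mpr hint).prod_left_ae] with zs hzs
  rw [hS]
  exact (integral_prod _ hzs).symm

section Reweighting

variable (hpos : ∀ v, 0 < p v) (hint : Integrable p)
  (hYC : ∀ y zc, pYC (y, zc) = ∫ zs, p (y, zc, zs))
  (hS : ∀ zs, pS zs = ∫ y : ℝ, ∫ zc : Fin dc → ℝ, p (y, zc, zs))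
include hpos hint hYC hS

lemma aemeasurable_reweightedDensity_comp_prodAssoc :
    AEMeasurable (fun z : (ℝ × (Fin dc → ℝ)) × (Fin ds → ℝ) =>
      reweightedDensity dc ds p pYC pS (z.1.1, z.1.2, z.2)) := by
  have hf := integrable_comp_prodAssoc_iff.mpr hint
  have hYCm := Measure.aemeasurable_of_ae_eq_integral_right hf (ae_of_all _ fun a => hYC a.1 a.2)
  have hSm := Measure.aemeasurable_of_ae_eq_integral_left hf (pS_ae_eq_integral hint hS)
  simp only [reweightedDensity_comp_prodAssoc hpos]
  fun_prop

lemma withDensity_reweightedDensity :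
    volume.withDensity (fun z => .ofReal (reweightedDensity dc ds p pYC pS (z.1.1, z.1.2, z.2))) =
      decoupledLaw p := by
  simp only [reweightedDensity_comp_prodAssoc hpos]
  refine Measure.withDensity_mul_marginals_eq_prod_fst_snd
    (integrable_comp_prodAssoc_iff.mpr hint) (fun _ => (hpos _).le) (fun a => ?_)
    (ae_of_all _ fun a => hYC a.1 a.2) (pS_ae_eq_integral hint hS)
  rw [← Prod.mk.eta (p := a), hYC]
  exact integral_nonneg fun _ => (hpos _).le

lemma integral_reweightedDensity_mul (F : ℝ × (Fin dc → ℝ) × (Fin ds → ℝ) → ℝ) :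
    ∫ v, reweightedDensity dc ds p pYC pS v * F v =
      ∫ z, F (z.1.1, z.1.2, z.2) ∂decoupledLaw p := by
  rw [volume_preserving_prodAssoc.integral_mul_eq_integral_withDensity
    (aemeasurable_reweightedDensity_comp_prodAssoc hpos hint hYC hS)
    (reweightedDensity_nonneg hpos hYC hS) F, ← withDensity_reweightedDensity hpos hint hYC hS]
  rfl

lemma integrable_reweightedDensity_mul_iff {F : ℝ × (Fin dc → ℝ) × (Fin ds → ℝ) → ℝ} :
    Integrable (fun v => reweightedDensity dc ds p pYC pS v * F v) ↔
      Integrable (fun z => F (z.1.1, z.1.2, z.2)) (decoupledLaw p) := by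
  rw [volume_preserving_prodAssoc.integrable_mul_iff_integrable_withDensity
    (aemeasurable_reweightedDensity_comp_prodAssoc hpos hint hYC hS)
    (reweightedDensity_nonneg hpos hYC hS), ← withDensity_reweightedDensity hpos hint hYC hS]
  rfl

lemma integral_reweightedDensity_mul_sq_sub_obsFeat
    (S : Matrix (Fin dc ⊕ Fin ds) (Fin dc ⊕ Fin ds) ℝ) (θ : Fin dc ⊕ Fin ds → ℝ) :
    ∫ v, reweightedDensity dc ds p pYC pS v * (v.1 - obsFeat dc ds S v ⬝ᵥ θ) ^ 2 =
      ∫ z, (z.1.1 - latentFeat z ⬝ᵥ Sᵀ *ᵥ θ) ^ 2 ∂decoupledLaw p := by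
  simp only [integral_reweightedDensity_mul hpos hint hYC hS, obsFeat_dotProduct]

lemma integral_comp_snd_jointLaw [IsProbabilityMeasure (jointLaw p)] {h : (Fin ds → ℝ) → ℝ}
    (hh : AEStronglyMeasurable h (jointLaw p).snd) :
    ∫ z, h z.2 ∂jointLaw p = ∫ v, reweightedDensity dc ds p pYC pS v * h v.2.2 := by
  rw [integral_reweightedDensity_mul hpos hint hYC hS]
  exact (Measure.integral_comp_snd_prod_fst_snd hh).symm

end Reweighting

end DebiasedPredictor

theorem weighted_ols_is_debiased_predictor_general (dc ds : ℕ)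
    (S T : Matrix (Fin dc ⊕ Fin ds) (Fin dc ⊕ Fin ds) ℝ)
    (hTS : T * S = 1)
    (p : ℝ × (Fin dc → ℝ) × (Fin ds → ℝ) → ℝ)
    (pYC : ℝ × (Fin dc → ℝ) → ℝ) (pS : (Fin ds → ℝ) → ℝ)
    (hpos : ∀ v, 0 < p v)
    (hint : Integrable p)
    (hnorm : ∫ v, p v = 1)
    (hYC : ∀ y zc, pYC (y, zc) = ∫ zs, p (y, zc, zs))
    (hS : ∀ zs, pS zs = ∫ y : ℝ, ∫ zc : Fin dc → ℝ, p (y, zc, zs))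
    -- features are centered under the reweighted distribution
    (hcs : ∀ j, (∫ v : ℝ × (Fin dc → ℝ) × (Fin ds → ℝ),
      reweightedDensity dc ds p pYC pS v * v.2.2 j) = 0)
    -- marginal second moment matrices
    (Sc : Matrix (Fin dc) (Fin dc) ℝ)
    (hSc : Sc = Matrix.of fun i j =>
      ∫ v : ℝ × (Fin dc → ℝ) × (Fin ds → ℝ), p v * v.2.1 i * v.2.1 j)
    [Invertible Sc]
    (Ss : Matrix (Fin ds) (Fin ds) ℝ)
    (hSs : Ss = Matrix.of fun i j =>
      ∫ v : ℝ × (Fin dc → ℝ) × (Fin ds → ℝ), p v * v.2.2 i * v.2.2 j)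
    [Invertible Ss]
    (hintL : ∀ θ : Fin dc ⊕ Fin ds → ℝ,
      Integrable (fun v : ℝ × (Fin dc → ℝ) × (Fin ds → ℝ) =>
        reweightedDensity dc ds p pYC pS v *
          (v.1 - dotProduct (obsFeat dc ds S v) θ) ^ 2))
    -- the optimal debiased predictor
    (θbar : Fin dc ⊕ Fin ds → ℝ)
    (hθbar : θbar = T.transpose.mulVec
      (Sum.elim (Sc⁻¹.mulVec fun i =>
        ∫ v : ℝ × (Fin dc → ℝ) × (Fin ds → ℝ), p v * v.2.1 i * v.1) 0)) :
    ∀ θ : Fin dc ⊕ Fin ds → ℝ,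
      (∫ v : ℝ × (Fin dc → ℝ) × (Fin ds → ℝ),
          reweightedDensity dc ds p pYC pS v *
            (v.1 - dotProduct (obsFeat dc ds S v) θbar) ^ 2) ≤
        (∫ v : ℝ × (Fin dc → ℝ) × (Fin ds → ℝ),
          reweightedDensity dc ds p pYC pS v *
            (v.1 - dotProduct (obsFeat dc ds S v) θ) ^ 2) ∧
      ((∫ v : ℝ × (Fin dc → ℝ) × (Fin ds → ℝ),
          reweightedDensity dc ds p pYC pS v *
            (v.1 - dotProduct (obsFeat dc ds S v) θ) ^ 2) =
        (∫ v : ℝ × (Fin dc → ℝ) × (Fin ds → ℝ),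
          reweightedDensity dc ds p pYC pS v *
            (v.1 - dotProduct (obsFeat dc ds S v) θbar) ^ 2) →
        θ = θbar) := by
  intro θ
  have hp0 : 0 ≤ p := fun v => (hpos v).le
  have := isProbabilityMeasure_jointLaw hp0 hint hnorm
  have hST := transpose_mulVec_transpose_mulVec_of_mul_eq_one hTS
  obtain ⟨hY, hZ⟩ := memLp_two_of_integrable_sq_sub_dotProduct (μ := decoupledLaw p)
    measurable_fst.fst.aestronglyMeasurable continuous_latentFeat.aestronglyMeasurable fun u => by
    simpa only [integrable_reweightedDensity_mul_iff hpos hint hYC hS, obsFeat_dotProduct, hST]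
      using hintL (Tᵀ *ᵥ u)
  have hmean : ∀ j, ∫ z, z.2 j ∂jointLaw p = 0 := fun j =>
    (integral_comp_snd_jointLaw hpos hint hYC hS (measurable_pi_apply j).aestronglyMeasurable).trans
      (hcs j)
  have hM := momentMatrix_decoupledLaw hp0 hint hmean
  rw [← hSc, ← hSs] at hM
  have hu₀ : momentMatrix (decoupledLaw p) latentFeat *ᵥ Sᵀ *ᵥ θbar =
      crossMoment (decoupledLaw p) (fun z => z.1.1) latentFeat := by
    rw [hM, crossMoment_decoupledLaw hp0 hint hmean, hθbar, hST, fromBlocks_mulVec]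
    simp [mulVec_mulVec]
  have hunit : IsUnit (momentMatrix (decoupledLaw p) latentFeat) :=
    hM ▸ @isUnit_of_invertible _ _ _ (fromBlocksZero₂₁Invertible Sc 0 Ss)
  obtain ⟨hle, huniq⟩ := integral_sq_sub_dotProduct_unique_min hY hZ hunit hu₀ (Sᵀ *ᵥ θ)
  simp only [integral_reweightedDensity_mul_sq_sub_obsFeat hpos hint hYC hS]
  refine ⟨hle, fun h => ?_⟩
  simpa only [transpose_mulVec_transpose_mulVec_of_mul_eq_one (mul_eq_one_comm.mp hTS)]
    using congrArg (Tᵀ *ᵥ ·) (huniq h)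

/-- Identifiability, population level: with `P > 0` everywhere, `x = S[z_c;z_s]`
invertible with inverse `T`, features centered under the weight
`w = P(y,z_c)P(z_s)/P(y,z_c,z_s)`, and invertible marginal second moment matrices,
the minimizer of the weighted population least-squares loss `E[w (y - x^⊤θ)²]` is the
optimal debiased predictor `θ̄ = T^⊤ [θ̄_c; 0]` with `θ̄_c = Σ_c⁻¹ E[z_c y]`;
in particular it places no weight on the spurious features. -/
theorem weighted_ols_is_debiased_predictor (dc ds : ℕ)
    (S T : Matrix (Fin dc ⊕ Fin ds) (Fin dc ⊕ Fin ds) ℝ)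
    (hTS : T * S = 1)
    (p : ℝ × (Fin dc → ℝ) × (Fin ds → ℝ) → ℝ)
    (pYC : ℝ × (Fin dc → ℝ) → ℝ) (pS : (Fin ds → ℝ) → ℝ)
    (hpos : ∀ v, 0 < p v)
    (hint : Integrable p)
    (hnorm : ∫ v, p v = 1)
    (hYC : ∀ y zc, pYC (y, zc) = ∫ zs, p (y, zc, zs))
    (hS : ∀ zs, pS zs = ∫ y : ℝ, ∫ zc : Fin dc → ℝ, p (y, zc, zs))
    -- features are centered under the reweighted distribution
    (hcc : ∀ i, (∫ v : ℝ × (Fin dc → ℝ) × (Fin ds → ℝ),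
      reweightedDensity dc ds p pYC pS v * v.2.1 i) = 0)
    (hcs : ∀ j, (∫ v : ℝ × (Fin dc → ℝ) × (Fin ds → ℝ),
      reweightedDensity dc ds p pYC pS v * v.2.2 j) = 0)
    -- marginal second moment matrices
    (Sc : Matrix (Fin dc) (Fin dc) ℝ)
    (hSc : Sc = Matrix.of fun i j =>
      ∫ v : ℝ × (Fin dc → ℝ) × (Fin ds → ℝ), p v * v.2.1 i * v.2.1 j)
    [Invertible Sc]
    (Ss : Matrix (Fin ds) (Fin ds) ℝ)
    (hSs : Ss = Matrix.of fun i j =>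
      ∫ v : ℝ × (Fin dc → ℝ) × (Fin ds → ℝ), p v * v.2.2 i * v.2.2 j)
    [Invertible Ss]
    (hintL : ∀ θ : Fin dc ⊕ Fin ds → ℝ,
      Integrable (fun v : ℝ × (Fin dc → ℝ) × (Fin ds → ℝ) =>
        reweightedDensity dc ds p pYC pS v *
          (v.1 - dotProduct (obsFeat dc ds S v) θ) ^ 2))
    -- the optimal debiased predictor
    (θbar : Fin dc ⊕ Fin ds → ℝ)
    (hθbar : θbar = T.transpose.mulVec
      (Sum.elim (Sc⁻¹.mulVec fun i =>
        ∫ v : ℝ × (Fin dc → ℝ) × (Fin ds → ℝ), p v * v.2.1 i * v.1) 0)) :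
    ∀ θ : Fin dc ⊕ Fin ds → ℝ,
      (∫ v : ℝ × (Fin dc → ℝ) × (Fin ds → ℝ),
          reweightedDensity dc ds p pYC pS v *
            (v.1 - dotProduct (obsFeat dc ds S v) θbar) ^ 2) ≤
        (∫ v : ℝ × (Fin dc → ℝ) × (Fin ds → ℝ),
          reweightedDensity dc ds p pYC pS v *
            (v.1 - dotProduct (obsFeat dc ds S v) θ) ^ 2) ∧
      ((∫ v : ℝ × (Fin dc → ℝ) × (Fin ds → ℝ),
          reweightedDensity dc ds p pYC pS v *
            (v.1 - dotProduct (obsFeat dc ds S v) θ) ^ 2) =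
        (∫ v : ℝ × (Fin dc → ℝ) × (Fin ds → ℝ),
          reweightedDensity dc ds p pYC pS v *
            (v.1 - dotProduct (obsFeat dc ds S v) θbar) ^ 2) →
        θ = θbar) :=
  weighted_ols_is_debiased_predictor_general dc ds S T hTS p pYC pS hpos hint hnorm hYC hS hcs Sc
    hSc Ss hSs hintL θbar hθbar
end
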